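/- arXiv:2306.14329 — 4 statements merged into one kernel-verified Lean document; each statement's English description precedes it below -/
import Mathlib

section
/- Let g, b > 0 and c > 0, and define f₁(x) = g x / (b(1-x)) and f₂(x) = 1 - e^{-c x} on [0,1). Then a solution x* ∈ (0,1) to f₁(x*) = f₂(x*) exists if and only if c > g/b, and when it exists it is unique. -/
open Real Set Filter

/-- The endemic equilibrium equation g x/(b(1-x)) = 1 - e^{-cx} has a solution in (0,1)
iff c > g/b, and such a solution is unique. -/
theorem endemic_equilibrium_exists_iff (g b c : ℝ) (hg : 0 < g) (hb : 0 < b) (hc : 0 < c)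
    (f₁ f₂ : ℝ → ℝ)
    (hf₁ : ∀ x, f₁ x = g * x / (b * (1 - x)))
    (hf₂ : ∀ x, f₂ x = 1 - Real.exp (-c * x)) :
    ((∃ x ∈ Set.Ioo (0 : ℝ) 1, f₁ x = f₂ x) ↔ c > g / b) ∧
    (∀ x ∈ Set.Ioo (0 : ℝ) 1, ∀ y ∈ Set.Ioo (0 : ℝ) 1, f₁ x = f₂ x → f₁ y = f₂ y → x = y) := by
  set φ : ℝ → ℝ := fun x => g * x / (b * (1 - x)) - (1 - Real.exp (-c * x)) with hφdef
  set φ' : ℝ → ℝ := fun x => g / (b * (1 - x)^2) - c * Real.exp (-c * x) with hφ'def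
  have hφ0 : φ 0 = 0 := by simp [hφdef]
  have hsol : ∀ x, f₁ x = f₂ x ↔ φ x = 0 := by
    intro x; rw [hf₁, hf₂, hφdef]; constructor <;> intro h <;> dsimp at * <;> linarith
  -- first derivative
  have hd : ∀ x ∈ Iio (1:ℝ), HasDerivAt φ (φ' x) x := by
    intro x hx
    have hx1 : (1:ℝ) - x ≠ 0 := by simp at hx; linarith
    have hden : b * (1 - x) ≠ 0 := mul_ne_zero hb.ne' hx1
    have h1 := ((hasDerivAt_id x).const_mul g).div
        (((hasDerivAt_id x).const_sub 1).const_mul b) hden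
    have h2 := (((hasDerivAt_id x).const_mul (-c)).exp).const_sub 1
    have h := h1.sub h2
    simp only [id_eq, mul_one] at h
    refine h.congr_deriv ?_
    rw [hφ'def, mul_pow]
    field_simp [hb.ne', hx1]
    ring
  -- second derivative
  have hd2 : ∀ x ∈ Iio (1:ℝ),
      HasDerivAt φ' (2 * g / (b * (1 - x)^3) + c^2 * Real.exp (-c * x)) x := by
    intro x hx
    have hx1 : (1:ℝ) - x ≠ 0 := by simp at hx; linarith
    have hden : b * (1 - x)^2 ≠ 0 := mul_ne_zero hb.ne' (pow_ne_zero 2 hx1)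
    have h1 := (hasDerivAt_const x g).div
        ((((hasDerivAt_id x).const_sub 1).pow 2).const_mul b) hden
    have h2 := ((((hasDerivAt_id x).const_mul (-c)).exp).const_mul c)
    have h := h1.sub h2
    simp only [id_eq, mul_one] at h
    refine h.congr_deriv ?_
    simp only [Pi.pow_apply]
    field_simp [hb.ne', hx1]
    ring
  have hcont' : ContinuousOn φ (Ico (0:ℝ) 1) := by
    intro x hx
    exact ((hd x hx.2).differentiableAt.differentiableWithinAt).continuousWithinAt
  -- strict convexity
  have hconv : StrictConvexOn ℝ (Ico (0:ℝ) 1) φ := by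
    apply strictConvexOn_of_deriv2_pos (convex_Ico 0 1) hcont'
    intro x hx
    rw [interior_Ico] at hx
    have hx1 : x ∈ Iio (1:ℝ) := hx.2
    have e1 : deriv φ =ᶠ[nhds x] φ' := by
      filter_upwards [Iio_mem_nhds hx.2] with y hy
      exact (hd y hy).deriv
    have e2 : deriv (deriv φ) x = deriv φ' x := e1.deriv_eq
    have e3 : deriv φ' x = 2 * g / (b * (1 - x)^3) + c^2 * Real.exp (-c * x) :=
      (hd2 x hx1).deriv
    show 0 < deriv^[2] φ x
    rw [Function.iterate_succ, Function.iterate_one, Function.comp_apply, e2, e3]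
    have h1x : (0:ℝ) < 1 - x := by linarith [hx.2]
    positivity
  -- uniqueness
  have huniq : ∀ x ∈ Set.Ioo (0 : ℝ) 1, ∀ y ∈ Set.Ioo (0 : ℝ) 1,
      f₁ x = f₂ x → f₁ y = f₂ y → x = y := by
    have key : ∀ x ∈ Set.Ioo (0:ℝ) 1, ∀ y ∈ Set.Ioo (0:ℝ) 1, x < y →
        φ x = 0 → φ y = 0 → False := by
      intro x hx y hy hxy hpx hpy
      have h0mem : (0:ℝ) ∈ Ico (0:ℝ) 1 := ⟨le_refl 0, one_pos⟩
      have hymem : y ∈ Ico (0:ℝ) 1 := ⟨hy.1.le, hy.2⟩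
      have hy0 : y ≠ 0 := ne_of_gt hy.1
      have ha : (0:ℝ) < 1 - x / y := by
        have : x / y < 1 := (div_lt_one hy.1).2 hxy
        linarith
      have hb' : (0:ℝ) < x / y := div_pos hx.1 hy.1
      have hsum : (1 - x / y) + x / y = 1 := by ring
      have := hconv.2 h0mem hymem (Ne.symm hy0) ha hb' hsum
      rw [smul_zero, zero_add] at this
      have hxy' : (x / y) • y = x := by
        rw [smul_eq_mul]; field_simp
      rw [hxy'] at this
      rw [hpx, hpy, hφ0] at this
      simp at this
    intro x hx y hy h1 h2
    rw [hsol] at h1 h2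
    rcases lt_trichotomy x y with h | h | h
    · exact absurd (key x hx y hy h h1 h2) (by simp)
    · exact h
    · exact absurd (key y hy x hx h h2 h1) (by simp)
  refine ⟨⟨?_, ?_⟩, huniq⟩
  · -- solution → c > g/b
    rintro ⟨x, hx, hsx⟩
    by_contra hle
    push_neg at hle
    rw [hsol] at hsx
    have h1x : (0:ℝ) < 1 - x := by linarith [hx.2]
    have hexp : 1 - c * x < Real.exp (-c * x) := by
      have := Real.add_one_lt_exp (x := -c * x) (by nlinarith [hx.1])
      linarith
    have hf2lt : 1 - Real.exp (-c * x) < c * x := by linarith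
    have hcx : c * x ≤ g / b * x := by nlinarith [hx.1]
    have hf1gt : g / b * x < g * x / (b * (1 - x)) := by
      rw [div_mul_eq_mul_div, div_lt_div_iff₀ hb (by positivity)]
      nlinarith [mul_pos (mul_pos (mul_pos hg hx.1) hb) hx.1]
    simp only [hφdef] at hsx
    linarith
  · -- c > g/b → solution
    intro hcgb
    set x₁ : ℝ := b / (g + b) with hx₁def
    have hx₁mem : x₁ ∈ Ioo (0:ℝ) 1 := by
      constructor
      · positivity
      · rw [hx₁def, div_lt_one (by positivity)]; linarith
    have hφx₁ : 0 < φ x₁ := by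
      have h1 : g * x₁ / (b * (1 - x₁)) = 1 := by
        rw [hx₁def]
        rw [div_eq_one_iff_eq]
        · field_simp
          ring
        · have : 1 - b / (g + b) = g / (g + b) := by field_simp; ring
          rw [this]
          positivity
      simp only [hφdef, h1]
      have := Real.exp_pos (-c * x₁)
      linarith
    -- find t near 0 with φ t < 0
    have hderiv0 : HasDerivAt φ (g / b - c) 0 := by
      have h := hd 0 (by norm_num)
      have hv : φ' 0 = g / b - c := by simp [hφ'def]
      rwa [hv] at h
    have hslope : Tendsto (slope φ 0) (nhdsWithin 0 {0}ᶜ) (nhds (g / b - c)) :=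
      hasDerivAt_iff_tendsto_slope.1 hderiv0
    have hneg : ∀ᶠ t in nhdsWithin 0 {0}ᶜ, slope φ 0 t < 0 :=
      hslope.eventually_lt_const (by linarith)
    have hmem : ∀ᶠ t in nhdsWithin (0:ℝ) {0}ᶜ, t ∈ Ioo (-x₁) x₁ :=
      eventually_nhdsWithin_of_eventually_nhds
        (eventually_of_mem (Ioo_mem_nhds (by linarith [hx₁mem.1]) hx₁mem.1) (fun t ht => ht))
    obtain ⟨t, ht1, ht2⟩ : ∃ t, (t ∈ Ioo (-x₁) x₁ ∧ slope φ 0 t < 0) ∧ t ∈ Ioi (0:ℝ) := by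
      have hle : nhdsWithin (0:ℝ) (Ioi 0) ≤ nhdsWithin (0:ℝ) {0}ᶜ :=
        nhdsWithin_mono 0 (fun t ht => ne_of_gt ht)
      have h1 : ∀ᶠ t in nhdsWithin (0:ℝ) (Ioi 0),
          t ∈ Ioo (-x₁) x₁ ∧ slope φ 0 t < 0 := (hmem.and hneg).filter_mono hle
      have h2 : ∀ᶠ t in nhdsWithin (0:ℝ) (Ioi 0), t ∈ Ioi (0:ℝ) :=
        eventually_mem_nhdsWithin
      exact (h1.and h2).exists
    have htpos : 0 < t := ht2
    have htx₁ : t < x₁ := ht1.1.2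
    have hφt : φ t < 0 := by
      have hs : slope φ 0 t = φ t / t := by
        rw [slope_def_field, hφ0, sub_zero, sub_zero]
      rw [hs] at ht1
      by_contra hge
      push_neg at hge
      have : 0 ≤ φ t / t := div_nonneg hge htpos.le
      linarith [ht1.2]
    -- IVT
    have hicc : Icc t x₁ ⊆ Ico (0:ℝ) 1 := fun z hz => ⟨htpos.le.trans hz.1, lt_of_le_of_lt hz.2 hx₁mem.2⟩
    have hivt := intermediate_value_Ioo (le_of_lt htx₁) (hcont'.mono hicc)
    have h0mem : (0:ℝ) ∈ Ioo (φ t) (φ x₁) := ⟨hφt, hφx₁⟩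
    obtain ⟨x, hxmem, hφx⟩ := hivt h0mem
    refine ⟨x, ⟨lt_trans htpos hxmem.1, lt_trans hxmem.2 hx₁mem.2⟩, (hsol x).2 hφx⟩
end

section
/- Let g, b > 0 and R₀ > 1, and set c = g R₀²/b. If x* ∈ (0,1) satisfies 1 - g x*/(b(1-x*)) - e^{-c x*} = 0, then the stability condition -(g + b(1 - e^{-c x*})) + b c (1-x*) e^{-c x*} < 0 is equivalent to h(x*) < 0, where h(x) = x² - (1 + b/(b+g)) x + (b/(b+g))(1 - 1/R₀²). -/
/-!
On the equilibrium, the equilibrium equation expresses `e^{-c x*}` rationally in `x*`;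
substituting it turns Brauer's stability expression into `h(x*)` times the positive factor
`g R₀² (b + g) / (b (1 - x*))`.
-/

lemma stability_expr_eq_mul_quadratic {g b R c x E : ℝ} (hb : b ≠ 0) (hbg : b + g ≠ 0)
    (hR : R ≠ 0) (hx : x ≠ 1) (hc : c = g * R ^ 2 / b) (hE : E = 1 - g * x / (b * (1 - x))) :
    -(g + b * (1 - E)) + b * c * (1 - x) * E =
      g * R ^ 2 * (b + g) / (b * (1 - x)) *
        (x ^ 2 - (1 + b / (b + g)) * x + b / (b + g) * (1 - 1 / R ^ 2)) := by
  have h1x : 1 - x ≠ 0 := sub_ne_zero.2 hx.symm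
  subst hc hE
  field_simp
  ring

/-- At an endemic equilibrium x*, Brauer's linearized stability criterion is equivalent
to h(x*) < 0 for the quadratic h. -/
theorem stability_criterion_equiv (g b R₀ : ℝ) (hg : 0 < g) (hb : 0 < b) (hR : 1 < R₀)
    (c : ℝ) (hc : c = g * R₀ ^ 2 / b)
    (x : ℝ) (hx : x ∈ Set.Ioo (0 : ℝ) 1)
    (heq : 1 - g * x / (b * (1 - x)) - Real.exp (-c * x) = 0)
    (h : ℝ → ℝ)
    (hh : ∀ y, h y = y ^ 2 - (1 + b / (b + g)) * y + (b / (b + g)) * (1 - 1 / R₀ ^ 2)) :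
    (-(g + b * (1 - Real.exp (-c * x))) + b * c * (1 - x) * Real.exp (-c * x) < 0)
      ↔ h x < 0 := by
  have h1x : 0 < 1 - x := sub_pos.2 hx.2
  have hR₀ : 0 < R₀ := zero_lt_one.trans hR
  have hE : Real.exp (-c * x) = 1 - g * x / (b * (1 - x)) := by linarith
  have hK : 0 < g * R₀ ^ 2 * (b + g) / (b * (1 - x)) := by positivity
  rw [stability_expr_eq_mul_quadratic hb.ne' (by positivity) hR₀.ne' hx.2.ne hc hE, hh x]
  exact smul_neg_iff_of_pos_left hK
end

section
/- Let g, b, c > 0 with bc/g ≤ 1 (i.e. R₀ ≤ 1). Then the only solution x ∈ [0,1) of g x/(b(1-x)) = 1 - e^{-cx} is x = 0. -/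
/-!
For `0 < x < 1` the left-hand side strictly exceeds `(g / b) x ≥ c x`, while by convexity of the
exponential the right-hand side satisfies `1 - e^{-cx} ≤ c x`; so no positive root exists.
-/

open Real

lemma mul_lt_div_mul_one_sub {g b c x : ℝ} (hg : 0 < g) (hb : 0 < b) (hbc : b * c ≤ g)
    (hx0 : 0 < x) (hx1 : x < 1) : c * x < g * x / (b * (1 - x)) :=
  calc c * x ≤ g * x / b := by
        rw [le_div_iff₀ hb]
        nlinarith
    _ < g * x / (b * (1 - x)) :=
        div_lt_div_of_pos_left (by positivity) (mul_pos hb (by linarith)) (by nlinarith)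

theorem no_endemic_equilibrium_general (g b c : ℝ) (hg : 0 < g) (hb : 0 < b)
    (hR : b * c / g ≤ 1) :
    ∀ x ∈ Set.Ico (0 : ℝ) 1,
      g * x / (b * (1 - x)) = 1 - Real.exp (-c * x) → x = 0 := by
  rintro x ⟨hx0, hx1⟩ heq
  by_contra hne
  have hx : 0 < x := lt_of_le_of_ne hx0 (Ne.symm hne)
  have hlin := mul_lt_div_mul_one_sub hg hb ((div_le_one hg).mp hR) hx hx1
  have hexp : 1 - c * x ≤ exp (-c * x) := by
    simpa only [neg_mul] using one_sub_le_exp_neg (c * x)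
  linarith

/-- When R₀ ≤ 1 (i.e. bc/g ≤ 1), the only equilibrium in [0,1) is the disease-free one. -/
theorem no_endemic_equilibrium (g b c : ℝ) (hg : 0 < g) (hb : 0 < b) (hc : 0 < c)
    (hR : b * c / g ≤ 1) :
    ∀ x ∈ Set.Ico (0 : ℝ) 1,
      g * x / (b * (1 - x)) = 1 - Real.exp (-c * x) → x = 0 :=
  no_endemic_equilibrium_general g b c hg hb hR
end

section
/- Let ν > 0 and r ≥ 1 an integer. For all integers i, j ≥ 0, the sum Σ_{k=0}^∞ (1/(1+ν))(ν/(1+ν))^k ((i+j+k+2)^r - (i+j+1)^r) is at most (i+j+1)^r · E[(H_b + 2)^r], where H_b is geometric on ℤ_{≥0} with mean ν, and E[(H_b+2)^r] < ∞. -/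
private lemma aux_summable (ν : ℝ) (hν : 0 < ν) (r m : ℕ) :
    Summable (fun k : ℕ => (1 / (1 + ν)) * (ν / (1 + ν)) ^ k * ((k : ℝ) + m) ^ r) := by
  set q : ℝ := ν / (1 + ν) with hq
  have h1ν : (0:ℝ) < 1 + ν := by linarith
  have hq0 : 0 < q := div_pos hν h1ν
  have hq1 : q < 1 := by
    rw [hq, div_lt_one h1ν]; linarith
  have hbase : Summable (fun n : ℕ => (n : ℝ) ^ r * q ^ n) :=
    summable_pow_mul_geometric_of_norm_lt_one r (by
      rw [Real.norm_eq_abs, abs_of_pos hq0]; exact hq1)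
  have hcomp : Summable (fun k : ℕ => ((k + m : ℕ) : ℝ) ^ r * q ^ (k + m)) :=
    hbase.comp_injective (add_left_injective m)
  have h2 : Summable (fun k : ℕ => ((k : ℝ) + m) ^ r * q ^ k) := by
    have := (hcomp.mul_right ((q ^ m)⁻¹))
    refine this.congr fun k => ?_
    push_cast
    rw [pow_add]
    field_simp
  refine (h2.mul_left (1 / (1 + ν))).congr fun k => ?_
  ring

/-- Moment-drift bound for the density-dependent Markov population process: the expected
increase of the r-th empirical moment weight under a bite is bounded by
(i+j+1)^r · E[(H_b + 2)^r], which is finite. -/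
theorem moment_drift_bound (ν : ℝ) (hν : 0 < ν) (r : ℕ) (hr : 1 ≤ r) :
    (∀ i j : ℕ,
      ∑' k : ℕ, (1 / (1 + ν)) * (ν / (1 + ν)) ^ k *
          (((i : ℝ) + j + k + 2) ^ r - ((i : ℝ) + j + 1) ^ r)
        ≤ ((i : ℝ) + j + 1) ^ r *
            ∑' k : ℕ, (1 / (1 + ν)) * (ν / (1 + ν)) ^ k * ((k : ℝ) + 2) ^ r) ∧
    Summable (fun k : ℕ => (1 / (1 + ν)) * (ν / (1 + ν)) ^ k * ((k : ℝ) + 2) ^ r) := by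
  have h1ν : (0:ℝ) < 1 + ν := by linarith
  have hc0 : (0:ℝ) ≤ 1 / (1 + ν) := by positivity
  have hq0 : (0:ℝ) ≤ ν / (1 + ν) := by positivity
  have hsum2 := aux_summable ν hν r 2
  constructor
  · intro i j
    set a : ℝ := (i : ℝ) + j + 1 with ha
    have ha1 : (1:ℝ) ≤ a := by
      have : (0:ℝ) ≤ (i:ℝ) + j := by positivity
      linarith
    -- summability of LHS
    have hsumA : Summable (fun k : ℕ =>
        (1 / (1 + ν)) * (ν / (1 + ν)) ^ k * (((i : ℝ) + j + k + 2) ^ r)) := by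
      have := aux_summable ν hν r (i + j + 2)
      refine this.congr fun k => ?_
      push_cast; ring_nf
    have hsumB : Summable (fun k : ℕ =>
        (1 / (1 + ν)) * (ν / (1 + ν)) ^ k * a ^ r) := by
      have : Summable (fun k : ℕ => (ν / (1 + ν)) ^ k) := by
        apply summable_geometric_of_lt_one hq0
        rw [div_lt_one h1ν]; linarith
      exact (this.mul_left _).mul_right _
    have hsumL : Summable (fun k : ℕ =>
        (1 / (1 + ν)) * (ν / (1 + ν)) ^ k * (((i : ℝ) + j + k + 2) ^ r - a ^ r)) := by
      refine (hsumA.sub hsumB).congr fun k => ?_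
      ring
    rw [← tsum_mul_left]
    refine Summable.tsum_le_tsum (fun k => ?_) hsumL ?_
    · have hcq : (0:ℝ) ≤ (1 / (1 + ν)) * (ν / (1 + ν)) ^ k := by positivity
      rw [show a ^ r * ((1 / (1 + ν)) * (ν / (1 + ν)) ^ k * ((k : ℝ) + 2) ^ r)
          = (1 / (1 + ν)) * (ν / (1 + ν)) ^ k * (a ^ r * ((k : ℝ) + 2) ^ r) by ring]
      refine mul_le_mul_of_nonneg_left ?_ hcq
      have hle : (i : ℝ) + j + k + 2 ≤ a * ((k : ℝ) + 2) := by
        have hk0 : (0:ℝ) ≤ (k:ℝ) := Nat.cast_nonneg k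
        nlinarith
      have h1 : ((i : ℝ) + j + k + 2) ^ r ≤ (a * ((k : ℝ) + 2)) ^ r := by
        apply pow_le_pow_left₀ (by positivity) hle
      have h2 : (0:ℝ) ≤ a ^ r := by positivity
      rw [mul_pow] at h1
      linarith
    · exact hsum2.mul_left _
  · exact hsum2
end
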